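/- Let ω̃ ∈ ℂ with ω̃ ≠ 0, and let k, m be positive integers. Let x₁, x₂, y₁, y₂ : ℝ → ℂ be differentiable, satisfying x₁' = 2y₂ − ω̃x₁, x₂' = 2y₁ + ω̃x₂, y₁' = ω̃y₁ − k·x₁^(k−1) − m·x₁^(m−1), y₂' = −ω̃y₂ (powers are natural-number powers). Then the function t ↦ ω̃·(x₁y₁ − x₂y₂) − k!·Σ_{j=0}^{k} (1/j!)·(2y₂/(k·ω̃))^(k−j)·x₁^j − m!·Σ_{j=0}^{m} (1/j!)·(2y₂/(m·ω̃))^(m−j)·x₁^j is constant on ℝ. -/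

import Mathlib

open scoped BigOperators

private lemma pow_pred_mul (V : ℂ) (ω : ℂ) (d : ℕ) :
    (d : ℂ) * V ^ (d - 1) * (-(ω * V)) = -(ω * ((d : ℂ) * V ^ d)) := by
  cases d with
  | zero => simp
  | succ e =>
    simp only [Nat.add_sub_cancel, pow_succ]
    ring

private lemma sum_id (ω U V : ℂ) (n : ℕ) (hn : 0 < n) :
    ∑ j ∈ Finset.range (n + 1),
      ((1 / (j.factorial : ℂ)) * ((↑(n - j) : ℂ) * V ^ (n - j - 1) * (-(ω * V))) * U ^ j
        + (1 / (j.factorial : ℂ)) * V ^ (n - j) * ((j : ℂ) * U ^ (j - 1) * ((n : ℂ) * ω * V - ω * U)))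
    = -((n : ℂ) * ω * U ^ n) / (n.factorial : ℂ) := by
  set f : ℕ → ℂ := fun j =>
    (1 / (j.factorial : ℂ)) * ((↑(n - j) : ℂ) * V ^ (n - j - 1) * (-(ω * V))) * U ^ j
      + (1 / (j.factorial : ℂ)) * V ^ (n - j) * ((j : ℂ) * U ^ (j - 1) * ((n : ℂ) * ω * V - ω * U))
    with hf
  set b : ℕ → ℂ := fun j => (n : ℂ) * ω * V ^ (n - j) * U ^ j / (j.factorial : ℂ) with hb
  have hstep : ∀ j ∈ Finset.range n, f (j + 1) = b j - b (j + 1) := by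
    intro j hj
    rw [Finset.mem_range] at hj
    obtain ⟨d, hd⟩ : ∃ d, n = j + 1 + d := ⟨n - (j+1), by omega⟩
    have e1 : n - (j + 1) = d := by omega
    have e2 : n - j = d + 1 := by omega
    have e3 : j + 1 - 1 = j := rfl
    simp only [hf, hb, e1, e2, e3]
    have hfact : ((j + 1).factorial : ℂ) = ((j : ℂ) + 1) * (j.factorial : ℂ) := by
      push_cast [Nat.factorial_succ]; ring
    have hjne : (j.factorial : ℂ) ≠ 0 := Nat.cast_ne_zero.mpr (Nat.factorial_ne_zero j)
    have hj1ne : ((j : ℂ) + 1) ≠ 0 := Nat.cast_add_one_ne_zero j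
    have hcast : (n : ℂ) = (j : ℂ) + 1 + (d : ℂ) := by rw [hd]; push_cast; ring
    rw [pow_pred_mul V ω d, hfact, hcast]
    push_cast
    field_simp
    ring
  rw [Finset.sum_range_succ', Finset.sum_congr rfl hstep, Finset.sum_range_sub' b]
  simp only [hf, hb, Nat.sub_zero, Nat.sub_self, pow_zero, Nat.factorial_zero,
    Nat.cast_zero, Nat.cast_one, mul_one, one_mul, zero_mul, mul_zero, add_zero, div_one]
  have h1 : (n : ℂ) * V ^ (n - 1) * (-(ω * V)) = -(ω * ((n : ℂ) * V ^ n)) :=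
    pow_pred_mul V ω n
  rw [h1]
  ring

private lemma cast_pow_pred (a : ℂ) (e : ℕ) :
    (e : ℂ) * a ^ (e - 1) * a = (e : ℂ) * a ^ e := by
  cases e with
  | zero => simp
  | succ d => rw [Nat.add_sub_cancel, pow_succ]; ring

private lemma hasDerivAt_pow_comp {f : ℝ → ℂ} {f' : ℂ} {t : ℝ}
    (hf : HasDerivAt f f' t) (j : ℕ) :
    HasDerivAt (fun t => f t ^ j) ((j : ℂ) * f t ^ (j - 1) * f') t := by
  induction j with
  | zero => simpa using hasDerivAt_const t (1 : ℂ)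
  | succ e ih =>
    have h := ih.mul hf
    have : HasDerivAt (fun t => f t ^ e * f t)
        (((e : ℂ) + 1) * f t ^ (e + 1 - 1) * f') t := by
      refine h.congr_deriv ?_
      rw [Nat.add_sub_cancel]
      linear_combination f' * cast_pow_pred (f t) e
    simpa only [← pow_succ, Nat.cast_add, Nat.cast_one] using this

private lemma key_deriv (ω : ℂ) (hω : ω ≠ 0) (n : ℕ) (hn : 0 < n)
    (x₁ y₂ : ℝ → ℂ)
    (hx₁ : ∀ t, HasDerivAt x₁ (2 * y₂ t - ω * x₁ t) t)
    (hy₂ : ∀ t, HasDerivAt y₂ (-(ω * y₂ t)) t) (t : ℝ) :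
    HasDerivAt (fun t => (n.factorial : ℂ) * ∑ j ∈ Finset.range (n + 1),
        (1 / (j.factorial : ℂ)) * (2 * y₂ t / ((n : ℂ) * ω)) ^ (n - j) * x₁ t ^ j)
      (-((n : ℂ) * ω * x₁ t ^ n)) t := by
  have hnω : (n : ℂ) * ω ≠ 0 :=
    mul_ne_zero (Nat.cast_ne_zero.mpr hn.ne') hω
  set V : ℝ → ℂ := fun t => 2 * y₂ t / ((n : ℂ) * ω) with hV
  have hVd : ∀ t, HasDerivAt V (-(ω * V t)) t := by
    intro t
    have h := ((hy₂ t).const_mul 2).div_const ((n : ℂ) * ω)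
    refine h.congr_deriv ?_
    simp only [hV]
    ring
  have hUd : ∀ t, HasDerivAt x₁ ((n : ℂ) * ω * V t - ω * x₁ t) t := by
    intro t
    have h2 : (n : ℂ) * ω * V t = 2 * y₂ t := by
      simp only [hV]; rw [mul_div_assoc']; exact mul_div_cancel_left₀ _ hnω
    rw [h2]; exact hx₁ t
  have hterm : ∀ j, HasDerivAt
      (fun t => (1 / (j.factorial : ℂ)) * V t ^ (n - j) * x₁ t ^ j)
      ((1 / (j.factorial : ℂ)) * ((↑(n - j) : ℂ) * V t ^ (n - j - 1) * (-(ω * V t))) * x₁ t ^ j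
        + (1 / (j.factorial : ℂ)) * V t ^ (n - j)
          * ((j : ℂ) * x₁ t ^ (j - 1) * ((n : ℂ) * ω * V t - ω * x₁ t))) t := by
    intro j
    have h1 := (((hasDerivAt_pow_comp (hVd t) (n - j))).const_mul (1 / (j.factorial : ℂ))).mul (hasDerivAt_pow_comp (hUd t) j)
    exact h1
  have hsum := HasDerivAt.fun_sum (fun j _ => hterm j) (u := Finset.range (n + 1))
  have hsum' := hsum.const_mul (n.factorial : ℂ)
  refine hsum'.congr_deriv ?_
  rw [sum_id ω (x₁ t) (V t) n hn]
  have hnf : (n.factorial : ℂ) ≠ 0 := Nat.cast_ne_zero.mpr (Nat.factorial_ne_zero n)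
  field_simp

/-- The polynomial form of the second first integral `I₂` of Proposition 6 of
the paper: for positive integer degrees `k, m`, along solutions of the rotating
exceptional system,
`I₂ = ω̃(x₁y₁ − x₂y₂) − k! Σ_{j=0}^{k} (1/j!)(2y₂/(kω̃))^{k−j} x₁^j
− m! Σ_{j=0}^{m} (1/j!)(2y₂/(mω̃))^{m−j} x₁^j` is constant. -/
theorem polynomial_first_integral_I2 (ω : ℂ) (hω : ω ≠ 0)
    (k m : ℕ) (hk : 0 < k) (hm : 0 < m)
    (x₁ x₂ y₁ y₂ : ℝ → ℂ)
    (hx₁ : ∀ t, HasDerivAt x₁ (2 * y₂ t - ω * x₁ t) t)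
    (hx₂ : ∀ t, HasDerivAt x₂ (2 * y₁ t + ω * x₂ t) t)
    (hy₁ : ∀ t, HasDerivAt y₁
      (ω * y₁ t - (k : ℂ) * x₁ t ^ (k - 1) - (m : ℂ) * x₁ t ^ (m - 1)) t)
    (hy₂ : ∀ t, HasDerivAt y₂ (-(ω * y₂ t)) t) :
    ∀ s t : ℝ,
      ω * (x₁ s * y₁ s - x₂ s * y₂ s)
        - (k.factorial : ℂ) * ∑ j ∈ Finset.range (k + 1),
            (1 / (j.factorial : ℂ)) * (2 * y₂ s / ((k : ℂ) * ω)) ^ (k - j) * x₁ s ^ j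
        - (m.factorial : ℂ) * ∑ j ∈ Finset.range (m + 1),
            (1 / (j.factorial : ℂ)) * (2 * y₂ s / ((m : ℂ) * ω)) ^ (m - j) * x₁ s ^ j
      = ω * (x₁ t * y₁ t - x₂ t * y₂ t)
        - (k.factorial : ℂ) * ∑ j ∈ Finset.range (k + 1),
            (1 / (j.factorial : ℂ)) * (2 * y₂ t / ((k : ℂ) * ω)) ^ (k - j) * x₁ t ^ j
        - (m.factorial : ℂ) * ∑ j ∈ Finset.range (m + 1),
            (1 / (j.factorial : ℂ)) * (2 * y₂ t / ((m : ℂ) * ω)) ^ (m - j) * x₁ t ^ j := by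

  set F : ℝ → ℂ := fun t =>
    ω * (x₁ t * y₁ t - x₂ t * y₂ t)
      - (k.factorial : ℂ) * ∑ j ∈ Finset.range (k + 1),
          (1 / (j.factorial : ℂ)) * (2 * y₂ t / ((k : ℂ) * ω)) ^ (k - j) * x₁ t ^ j
      - (m.factorial : ℂ) * ∑ j ∈ Finset.range (m + 1),
          (1 / (j.factorial : ℂ)) * (2 * y₂ t / ((m : ℂ) * ω)) ^ (m - j) * x₁ t ^ j
    with hFdef
  have hF : ∀ t, HasDerivAt F 0 t := by
    intro t
    have h1 : HasDerivAt (fun t => ω * (x₁ t * y₁ t - x₂ t * y₂ t))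
        (ω * (((2 * y₂ t - ω * x₁ t) * y₁ t
          + x₁ t * (ω * y₁ t - (k : ℂ) * x₁ t ^ (k - 1) - (m : ℂ) * x₁ t ^ (m - 1)))
          - ((2 * y₁ t + ω * x₂ t) * y₂ t + x₂ t * (-(ω * y₂ t))))) t :=
      (((hx₁ t).mul (hy₁ t)).sub ((hx₂ t).mul (hy₂ t))).const_mul ω
    have h2 := key_deriv ω hω k hk x₁ y₂ hx₁ hy₂ t
    have h3 := key_deriv ω hω m hm x₁ y₂ hx₁ hy₂ t
    have h := (h1.sub h2).sub h3
    refine h.congr_deriv ?_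
    have hk1 : x₁ t ^ (k - 1) * x₁ t = x₁ t ^ k := by
      rw [← pow_succ, Nat.sub_add_cancel hk]
    have hm1 : x₁ t ^ (m - 1) * x₁ t = x₁ t ^ m := by
      rw [← pow_succ, Nat.sub_add_cancel hm]
    linear_combination -((k : ℂ) * ω) * hk1 - ((m : ℂ) * ω) * hm1
  exact fun s t =>
    is_const_of_deriv_eq_zero (fun x => (hF x).differentiableAt)
      (fun x => (hF x).deriv) s t
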